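/- In the construction of Theorem 1, the unitary U on H ⊗ ℓ²(J) ⊗ ℂ² can be chosen such that the qubit factor ℂ² acts as a catalyst: for every state ρ on H there exists a state ω on H ⊗ ℓ²(J) with U(ρ ⊗ |e_{j₀}⟩⟨e_{j₀}| ⊗ |e₁⟩⟨e₁|)U* = ω ⊗ |e₁⟩⟨e₁|. -/

import Mathlib

/-!
The Kraus condition makes `V x = ∑_j K_j x ⊗ e_j` an isometry, so `s = V (1 ⊗ ⟨e_{j₀}|)` is a
partial isometry with initial projection `1 ⊗ |e_{j₀}⟩⟨e_{j₀}|`. Halmos' dilation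
`U = [[s, 1 - s s*], [1 - s* s, s*]]` of `s` is unitary on `H ⊗ ℓ²(J) ⊗ ℂ²`, and for `σ` supported
on the initial space of `s` it gives `U (σ ⊗ |e₁⟩⟨e₁|) U* = s σ s* ⊗ |e₁⟩⟨e₁|`: the `e₁` slice is
never left. For `σ = ρ ⊗ |e_{j₀}⟩⟨e_{j₀}|` this is `ω = V ρ V*`, which is positive.
-/

open ContinuousLinearMap

variable {ι : Type*} [DecidableEq ι] {H : Type*} [NormedAddCommGroup H] [InnerProductSpace ℂ H]

/-- `x ↦ x ⊗ e_i`: the isometric embedding of `H` onto the `i`-th summand of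
`H ⊗ ℓ²(ι) ≅ ⊕²_ι H` (modelled as `lp (fun _ : ι => H) 2`), as a continuous linear map. -/
noncomputable def lpSingleL (i : ι) : H →L[ℂ] lp (fun _ : ι => H) 2 :=
  LinearMap.mkContinuous
    { toFun := fun x => lp.single 2 i x
      map_add' := fun x y => by
        apply lp.ext; funext j
        by_cases h : j = i
        · subst h
          simp [lp.single_apply_self, lp.coeFn_add]
        · simp [lp.single_apply_ne _ _ _ h, lp.coeFn_add]
      map_smul' := fun c x => by simp }
    1 (fun x => by
        simpa using (lp.norm_single (p := 2) (E := fun _ : ι => H) (by norm_num)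
          (fun _ => x) i).le)

/-- `(1 ⊗ ⟨e_i|)`: evaluation of the `i`-th component of `H ⊗ ℓ²(ι) ≅ ⊕²_ι H`. -/
noncomputable def lpProjL (i : ι) : lp (fun _ : ι => H) 2 →L[ℂ] H :=
  LinearMap.mkContinuous
    { toFun := fun f => f i
      map_add' := fun f g => by simp [lp.coeFn_add]
      map_smul' := fun c f => by simp [lp.coeFn_smul] }
    1 (fun f => by
      show ‖f i‖ ≤ 1 * ‖f‖
      simpa using lp.norm_apply_le_norm (by norm_num) f i)

/-- The embedding `v ↦ v ⊗ e₁` of `E` onto the first summand of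
`E ⊗ ℂ² ≅ E ×₂ E` (modelled as `WithLp 2 (E × E)`). -/
noncomputable def qubitEmbed1 {E : Type*} [NormedAddCommGroup E] [InnerProductSpace ℂ E] :
    E →L[ℂ] WithLp 2 (E × E) :=
  ((WithLp.prodContinuousLinearEquiv 2 ℂ E E).symm : E × E →L[ℂ] WithLp 2 (E × E)) ∘L
    ContinuousLinearMap.inl ℂ E E

/-- The projection `(1 ⊗ ⟨e₁|)` of `E ⊗ ℂ² ≅ E ×₂ E` onto the first summand. -/
noncomputable def qubitProj1 {E : Type*} [NormedAddCommGroup E] [InnerProductSpace ℂ E] :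
    WithLp 2 (E × E) →L[ℂ] E :=
  ContinuousLinearMap.fst ℂ E E ∘L
    ((WithLp.prodContinuousLinearEquiv 2 ℂ E E) : WithLp 2 (E × E) →L[ℂ] E × E)

section PartialIsometry

variable {R : Type*} [Ring R] [StarRing R]

def IsPartialIsometry (s : R) : Prop := s * star s * s = s

namespace IsPartialIsometry

variable {s : R} (hs : IsPartialIsometry s)
include hs

lemma star_mul_self_mul_star : star s * s * star s = star s := by
  simpa [mul_assoc] using congrArg star hs

protected lemma star : IsPartialIsometry (star s) := by
  rw [IsPartialIsometry, star_star]
  exact hs.star_mul_self_mul_star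

lemma mul_one_sub_star_mul_self : s * (1 - star s * s) = 0 := by
  rw [mul_sub, ← mul_assoc, hs, mul_one, sub_self]

lemma one_sub_mul_star_self_mul : (1 - s * star s) * s = 0 := by
  rw [sub_mul, hs, one_mul, sub_self]

end IsPartialIsometry

def halmosDilation (s : R) : Matrix (Fin 2) (Fin 2) R :=
  !![s, 1 - s * star s; 1 - star s * s, star s]

lemma star_halmosDilation (s : R) : star (halmosDilation s) = halmosDilation (star s) := by
  ext i j
  fin_cases i <;> fin_cases j <;> simp [halmosDilation, Matrix.star_apply]

lemma halmosDilation_mul_halmosDilation_star {s : R} (hs : IsPartialIsometry s) :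
    halmosDilation s * halmosDilation (star s) = 1 := by
  have h₁ := hs.mul_one_sub_star_mul_self
  have h₂ := hs.one_sub_mul_star_self_mul
  have h₃ := hs.star.mul_one_sub_star_mul_self
  have h₄ := hs.star.one_sub_mul_star_self_mul
  rw [star_star] at h₃ h₄
  have hq : (1 - s * star s) * (1 - s * star s) = 1 - s * star s := by
    rw [mul_sub (1 - s * star s), ← mul_assoc, h₂, zero_mul, mul_one, sub_zero]
  have hp : (1 - star s * s) * (1 - star s * s) = 1 - star s * s := by
    rw [mul_sub (1 - star s * s), ← mul_assoc, h₄, zero_mul, mul_one, sub_zero]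
  simp only [halmosDilation, star_star, Matrix.mul_fin_two, h₁, h₂, h₃, h₄, hp, hq]
  ext i j
  fin_cases i <;> fin_cases j <;> simp

lemma halmosDilation_mem_unitary {s : R} (hs : IsPartialIsometry s) :
    halmosDilation s ∈ unitary (Matrix (Fin 2) (Fin 2) R) := by
  rw [Unitary.mem_iff, star_halmosDilation]
  refine ⟨?_, halmosDilation_mul_halmosDilation_star hs⟩
  simpa using halmosDilation_mul_halmosDilation_star hs.star

lemma halmosDilation_mul_diag_star_mul_self {s : R} (hs : IsPartialIsometry s) :
    halmosDilation s * !![star s * s, 0; 0, 0] = !![s, 0; 0, 0] := by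
  have h₁ : s * (star s * s) = s := by rw [← mul_assoc, hs]
  have h₂ : (1 - star s * s) * (star s * s) = 0 := by
    rw [sub_mul, one_mul, ← mul_assoc, hs.star_mul_self_mul_star, sub_self]
  simp [halmosDilation, h₁, h₂]

lemma halmosDilation_conj_diag {s a : R} (hl : star s * s * a = a) (hr : a * (star s * s) = a) :
    halmosDilation s * !![a, 0; 0, 0] * star (halmosDilation s) = !![s * a * star s, 0; 0, 0] := by
  have h₁ : (1 - star s * s) * a = 0 := by rw [sub_mul, one_mul, hl, sub_self]
  have h₂ : a * (1 - star s * s) = 0 := by rw [mul_sub, mul_one, hr, sub_self]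
  rw [star_halmosDilation, halmosDilation, halmosDilation, star_star]
  ext i j
  fin_cases i <;> fin_cases j <;> simp [Matrix.mul_apply, Fin.sum_univ_two, h₁, mul_assoc, h₂]

end PartialIsometry

section BlockOperator

variable {E : Type*} [NormedAddCommGroup E] [InnerProductSpace ℂ E]

noncomputable def blockOp [CompleteSpace E] :
    Matrix (Fin 2) (Fin 2) (E →L[ℂ] E) →⋆* (WithLp 2 (E × E) →L[ℂ] WithLp 2 (E × E)) where
  toFun M := ((WithLp.prodContinuousLinearEquiv 2 ℂ E E).symm : E × E →L[ℂ] WithLp 2 (E × E)) ∘L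
    ((M 0 0).coprod (M 0 1)).prod ((M 1 0).coprod (M 1 1)) ∘L
    ((WithLp.prodContinuousLinearEquiv 2 ℂ E E) : WithLp 2 (E × E) →L[ℂ] E × E)
  map_one' := by
    ext v
    simp
    rfl
  map_mul' M N := by
    ext v
    simp [Matrix.mul_apply, Fin.sum_univ_two]
  map_star' M := by
    refine (eq_adjoint_iff _ _).2 fun v w => ?_
    simp [Matrix.star_apply, star_eq_adjoint, adjoint_inner_left, inner_add_left, inner_add_right]
    ring

variable [CompleteSpace E]

lemma blockOp_diag_apply_qubitEmbed1 (X : E →L[ℂ] E) (x : E) :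
    blockOp !![X, 0; 0, 0] (qubitEmbed1 x) = qubitEmbed1 (X x) := by
  simp [blockOp, qubitEmbed1]

lemma qubitEmbed1_comp_comp_qubitProj1 (X : E →L[ℂ] E) :
    qubitEmbed1 ∘L X ∘L qubitProj1 = blockOp !![X, 0; 0, 0] := by
  ext v
  simp [blockOp, qubitEmbed1, qubitProj1]

end BlockOperator

section Kraus

variable [CompleteSpace H] {J : Type*} (K : J → H →L[ℂ] H)
  (hK : ∀ x : H, HasSum (fun j => adjoint (K j) ((K j) x)) x)
include hK

lemma hasSum_inner_kraus (x y : H) :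
    HasSum (fun j => inner ℂ (K j x) (K j y)) (inner ℂ x y) := by
  simpa [adjoint_inner_right] using (hK y).mapL (innerSL ℂ x)

lemma memℓp_kraus (x : H) : Memℓp (fun j => K j x) 2 := by
  have h := Complex.hasSum_re (hasSum_inner_kraus K hK x x)
  refine memℓp_gen ?_
  simpa [inner_self_eq_norm_sq_to_K, ← Complex.ofReal_pow] using h.summable

noncomputable def krausIsometry : H →ₗᵢ[ℂ] lp (fun _ : J => H) 2 :=
  { toFun x := ⟨fun j => K j x, memℓp_kraus K hK x⟩
    map_add' x y := by ext j; exact map_add (K j) x y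
    map_smul' c x := by ext j; simp
    norm_map' := (LinearMap.norm_map_iff_inner_map_map _).2 fun x y =>
      (lp.hasSum_inner _ _).unique (hasSum_inner_kraus K hK x y) }

end Kraus

section LpSlice

variable [CompleteSpace H]

lemma adjoint_lpProjL (i : ι) : adjoint (lpProjL (H := H) i) = lpSingleL i :=
  ((eq_adjoint_iff _ _).2 fun x f => lp.inner_single_left i x f).symm

lemma lpProjL_comp_adjoint (i : ι) : lpProjL (H := H) i ∘L adjoint (lpProjL i) = 1 := by
  rw [adjoint_lpProjL]
  ext x
  exact lp.single_apply_self (E := fun _ : ι => H) 2 i x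

end LpSlice

section Dilation

variable {F : Type*} [NormedAddCommGroup F] [InnerProductSpace ℂ F] [CompleteSpace F]
  {G : Type*} [NormedAddCommGroup G] [InnerProductSpace ℂ G] [CompleteSpace G]
  {V : F →L[ℂ] G} {π : G →L[ℂ] F}

lemma star_comp_self_of_isometry (hV : adjoint V ∘L V = 1) :
    star (V ∘L π) * (V ∘L π) = adjoint π ∘L π := by
  rw [star_eq_adjoint, adjoint_comp, mul_def, comp_assoc, ← comp_assoc (adjoint V), hV, one_def,
    id_comp]

lemma isPartialIsometry_comp (hV : adjoint V ∘L V = 1) (hπ : π ∘L adjoint π = 1) :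
    IsPartialIsometry (V ∘L π) := by
  rw [IsPartialIsometry, mul_assoc, star_comp_self_of_isometry hV, mul_def, comp_assoc,
    ← comp_assoc π, hπ, one_def, id_comp]

lemma blockOp_halmosDilation_comp_apply (hV : adjoint V ∘L V = 1) (hπ : π ∘L adjoint π = 1)
    (x : F) :
    blockOp (halmosDilation (V ∘L π)) (qubitEmbed1 (adjoint π x)) = qubitEmbed1 (V x) := by
  have hπx : π (adjoint π x) = x := DFunLike.congr_fun hπ x
  calc blockOp (halmosDilation (V ∘L π)) (qubitEmbed1 (adjoint π x))
      = blockOp (halmosDilation (V ∘L π))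
          (blockOp !![star (V ∘L π) * (V ∘L π), 0; 0, 0] (qubitEmbed1 (adjoint π x))) := by
        rw [blockOp_diag_apply_qubitEmbed1, star_comp_self_of_isometry hV, comp_apply, hπx]
    _ = blockOp !![V ∘L π, 0; 0, 0] (qubitEmbed1 (adjoint π x)) := by
        rw [← comp_apply, ← mul_def, ← map_mul,
          halmosDilation_mul_diag_star_mul_self (isPartialIsometry_comp hV hπ)]
    _ = qubitEmbed1 (V x) := by
        rw [blockOp_diag_apply_qubitEmbed1, comp_apply, hπx]

lemma halmosDilation_comp_conj (hV : adjoint V ∘L V = 1) (hπ : π ∘L adjoint π = 1)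
    (ρ : F →L[ℂ] F) :
    halmosDilation (V ∘L π) * !![adjoint π ∘L ρ ∘L π, 0; 0, 0] * star (halmosDilation (V ∘L π))
      = !![V ∘L ρ ∘L adjoint V, 0; 0, 0] := by
  have hπ' (X : G →L[ℂ] F) : π ∘L adjoint π ∘L X = X := by
    rw [← comp_assoc, hπ, one_def, id_comp]
  rw [halmosDilation_conj_diag]
  · simp only [mul_def, star_eq_adjoint, adjoint_comp, comp_assoc, hπ']
  · simp only [star_comp_self_of_isometry hV, mul_def, comp_assoc, hπ']
  · simp only [star_comp_self_of_isometry hV, mul_def, comp_assoc, hπ']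

end Dilation

/-- With `T := lp (fun _ : J => H) 2` for `H ⊗ ℓ²(J)` and `WithLp 2 (T × T)` for `H ⊗ ℓ²(J) ⊗ ℂ²`
(first component = the `⊗ e₁` slice), the operator `ρ ⊗ |e_{j₀}⟩⟨e_{j₀}| ⊗ |e₁⟩⟨e₁|` is
`qubitEmbed1 ∘L (lpSingleL j₀ ∘L ρ ∘L lpProjL j₀) ∘L qubitProj1`. -/
theorem stinespring_qubit_is_catalyst
    [CompleteSpace H] {J : Type*} [DecidableEq J] (j₀ : J)
    (K : J → H →L[ℂ] H)
    (hK : ∀ x : H, HasSum (fun j => adjoint (K j) ((K j) x)) x) :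
    ∃ U ∈ unitary (WithLp 2 ((lp (fun _ : J => H) 2) × (lp (fun _ : J => H) 2)) →L[ℂ]
        WithLp 2 ((lp (fun _ : J => H) 2) × (lp (fun _ : J => H) 2))),
      (∀ x : H,
        HasSum (fun j => qubitEmbed1 (lp.single 2 j ((K j) x)))
          (U (qubitEmbed1 (lp.single 2 j₀ x)))) ∧
      ∀ ρ : H →L[ℂ] H, ρ.IsPositive →
        ∃ ω : lp (fun _ : J => H) 2 →L[ℂ] lp (fun _ : J => H) 2, ω.IsPositive ∧
          U * (qubitEmbed1 ∘L (lpSingleL j₀ ∘L ρ ∘L lpProjL j₀) ∘L qubitProj1) * star U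
            = qubitEmbed1 ∘L ω ∘L qubitProj1 := by
  set V := (krausIsometry K hK).toContinuousLinearMap
  have hV : adjoint V ∘L V = 1 := LinearIsometry.adjoint_comp_self _
  have hπ := lpProjL_comp_adjoint (H := H) j₀
  refine ⟨blockOp (halmosDilation (V ∘L lpProjL j₀)),
    Unitary.map_mem _ (halmosDilation_mem_unitary (isPartialIsometry_comp hV hπ)), fun x => ?_,
    fun ρ hρ => ⟨V ∘L ρ ∘L adjoint V, hρ.conj_adjoint V, ?_⟩⟩
  · rw [show lp.single 2 j₀ x = adjoint (lpProjL j₀) x by rw [adjoint_lpProjL]; rfl,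
      blockOp_halmosDilation_comp_apply hV hπ]
    exact (lp.hasSum_single (by norm_num) (V x)).mapL qubitEmbed1
  · rw [← adjoint_lpProjL, qubitEmbed1_comp_comp_qubitProj1, qubitEmbed1_comp_comp_qubitProj1,
      ← map_star, ← map_mul, ← map_mul, halmosDilation_comp_conj hV hπ]
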